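/- For any finite simple graph G, α₂^{DP}(G) ≥ |V(G)| − τ(G), where τ(G) is the feedback vertex number of G, i.e., the minimum size of a set S ⊆ V(G) such that the induced subgraph G − S is acyclic. -/

import Mathlib

/-! After deleting a minimum feedback vertex set `S`, the remaining graph is a forest, so every
nonempty set of its vertices contains a vertex with at most one neighbour inside it. Peeling such
vertices off and choosing list elements in the reverse order, each vertex of `V ∖ S` sees at most
one already chosen neighbour, and by the matching condition that choice blocks at most one of its
two list elements. This yields an independent set of `H` meeting every `L v` with `v ∉ S`, so
`α(H) ≥ |V| - τ(G)` for every 2-fold cover. -/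

open SimpleGraph

/-- `DPCover G H L` means `(L, H)` is a cover of the graph `G`:
(1) the sets `L u` partition `V(H)`; (2) each `H[L u]` is complete;
(3) for each edge `uv` of `G`, the edges of `H` between `L u` and `L v` form a matching;
(4) there are no edges of `H` between lists of distinct non-adjacent vertices. -/
structure DPCover {V : Type} (G : SimpleGraph V) {W : Type} (H : SimpleGraph W)
    (L : V → Finset W) : Prop where
  partition : ∀ w : W, ∃! v : V, w ∈ L v
  cliques : ∀ v : V, ∀ a ∈ L v, ∀ b ∈ L v, a ≠ b → H.Adj a b
  matching : ∀ ⦃u v : V⦄, G.Adj u v → ∀ a ∈ L u, ∀ b ∈ L v, ∀ b' ∈ L v,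
      H.Adj a b → H.Adj a b' → b = b'
  nonadj : ∀ ⦃u v : V⦄, u ≠ v → ¬ G.Adj u v → ∀ a ∈ L u, ∀ b ∈ L v, ¬ H.Adj a b

/-- A finset is independent in `H` if no two of its elements are adjacent. -/
def IsIndepFinset {W : Type} (H : SimpleGraph W) (S : Finset W) : Prop :=
  ∀ a ∈ S, ∀ b ∈ S, ¬ H.Adj a b

/-- The independence number of `H`. -/
noncomputable def indepNum {W : Type} [Fintype W] (H : SimpleGraph W) : ℕ :=
  sSup {n : ℕ | ∃ S : Finset W, IsIndepFinset H S ∧ S.card = n}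

/-- The DP-chromatic number of `G`: the least `m` such that every `m`-fold cover `(L, H)`
of `G` admits an `H`-coloring, i.e. an independent set in `H` of size `|V(G)|`. -/
noncomputable def chiDP {V : Type} [Fintype V] (G : SimpleGraph V) : ℕ :=
  sInf {m : ℕ | ∀ (W : Type) (_ : Fintype W) (H : SimpleGraph W) (L : V → Finset W),
    DPCover G H L → (∀ v, (L v).card = m) →
    ∃ S : Finset W, IsIndepFinset H S ∧ S.card = Fintype.card V}

/-- The partial DP `t`-chromatic number of `G`: the minimum of the independence number
`α(H)` over all `t`-fold covers `(L, H)` of `G`. -/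
noncomputable def alphaDP {V : Type} [Fintype V] (G : SimpleGraph V) (t : ℕ) : ℕ :=
  sInf {n : ℕ | ∃ (W : Type) (_ : Fintype W) (H : SimpleGraph W) (L : V → Finset W),
    DPCover G H L ∧ (∀ v, (L v).card = t) ∧ _root_.indepNum H = n}

/-- A graph `G` is partially DP-nice if `α_t^{DP}(G) ≥ t|V(G)|/χ_DP(G)` for all
`t ∈ {1, …, χ_DP(G)}`. -/
def PartiallyDPNice {V : Type} [Fintype V] (G : SimpleGraph V) : Prop :=
  ∀ t : ℕ, 1 ≤ t → t ≤ chiDP G →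
    (t * Fintype.card V : ℚ) / (chiDP G : ℚ) ≤ (alphaDP G t : ℚ)

/-- The feedback vertex number `τ(G)`: the minimum size of a set `S` of vertices such
that the induced subgraph `G − S` is acyclic. -/
noncomputable def feedbackVertexNumber {V : Type} [Fintype V] (G : SimpleGraph V) : ℕ :=
  sInf {k : ℕ | ∃ S : Finset V, S.card = k ∧ (G.induce {v : V | v ∉ S}).IsAcyclic}

open Finset

namespace SimpleGraph

variable {V : Type} {G : SimpleGraph V}

theorem IsAcyclic.exists_neighborSet_subsingleton [Finite V] [Nonempty V] (h : G.IsAcyclic) :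
    ∃ v, (G.neighborSet v).Subsingleton := by
  obtain ⟨u, _, p, hp, hmax⟩ := Walk.exists_isPath_forall_isPath_length_le_length G
  refine ⟨u, fun w hw w' hw' => ?_⟩
  -- By maximality of `p` every neighbour of `u` lies on `p`; acyclicity forces it to be `p.snd`.
  have hsnd : ∀ x, G.Adj u x → x = p.snd := fun x hx =>
    h.eq_snd_of_adj_start hp hx <| by
      by_contra hxp
      have := hmax _ _ _ (hp.cons hxp (h := hx.symm))
      simp at this
  rw [hsnd w hw, hsnd w' hw']

theorem IsAcyclic.exists_card_filter_adj_le_one {s : Set V} (h : (G.induce s).IsAcyclic)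
    [DecidableRel G.Adj] {B : Finset V} (hB : ↑B ⊆ s) (hne : B.Nonempty) :
    ∃ v ∈ B, #{u ∈ B | G.Adj v u} ≤ 1 := by
  have : Nonempty (B : Set V) := hne.coe_sort
  obtain ⟨⟨v, hv⟩, hsub⟩ :=
    (h.embedding (G.induceHomOfLE hB)).exists_neighborSet_subsingleton
  refine ⟨v, hv, card_le_one.mpr fun a ha b hb => ?_⟩
  simp only [mem_filter] at ha hb
  exact congrArg Subtype.val (@hsub ⟨a, ha.1⟩ ha.2 ⟨b, hb.1⟩ hb.2)

end SimpleGraph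

section

variable {V W : Type} {G : SimpleGraph V} {H : SimpleGraph W} {L : V → Finset W}

theorem IsIndepFinset.card_le_indepNum [Fintype W] {I : Finset W} (hI : IsIndepFinset H I) :
    #I ≤ _root_.indepNum H :=
  le_csSup ⟨Fintype.card W, by rintro _ ⟨J, -, rfl⟩; exact card_le_univ J⟩ ⟨I, hI, rfl⟩

namespace DPCover

theorem card_filter_adj_le_one [DecidableRel H.Adj] (C : DPCover G H L) {u v : V}
    (huv : G.Adj u v) {a : W} (ha : a ∈ L u) : #{b ∈ L v | H.Adj a b} ≤ 1 :=
  card_le_one.mpr fun b hb b' hb' =>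
    C.matching huv a ha b (mem_filter.mp hb).1 b' (mem_filter.mp hb').1
      (mem_filter.mp hb).2 (mem_filter.mp hb').2

theorem exists_mem_forall_not_adj (C : DPCover G H L) (v : V) (N : Finset V)
    (hN : ∀ u ∈ N, G.Adj u v) (f : V → W) (hf : ∀ u ∈ N, f u ∈ L u)
    (hcard : #N < #(L v)) :
    ∃ w ∈ L v, ∀ u ∈ N, ¬ H.Adj (f u) w := by
  classical
  have hblocked : #(N.biUnion fun u => {b ∈ L v | H.Adj (f u) b}) < #(L v) :=
    (card_biUnion_le_card_mul N _ 1 fun u hu =>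
      C.card_filter_adj_le_one (hN u hu) (hf u hu)).trans_lt (by simpa using hcard)
  obtain ⟨w, hw, hwN⟩ := exists_mem_notMem_of_card_lt_card hblocked
  refine ⟨w, hw, fun u hu hadj => hwN ?_⟩
  exact mem_biUnion.mpr ⟨u, hu, mem_filter.mpr ⟨hw, hadj⟩⟩

theorem injOn_of_forall_mem (C : DPCover G H L) {f : V → W} {A : Finset V}
    (hf : ∀ v ∈ A, f v ∈ L v) :
    Set.InjOn f A := fun x hx y hy hxy =>
  (C.partition (f x)).unique (hf x hx) (hxy ▸ hf y hy)

theorem exists_indep_transversal [DecidableRel G.Adj] (C : DPCover G H L)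
    (hL : ∀ v, (L v).Nonempty) (A : Finset V)
    (hA : ∀ B ⊆ A, B.Nonempty → ∃ v ∈ B, #{u ∈ B | G.Adj v u} < #(L v)) :
    ∃ f : V → W, (∀ v ∈ A, f v ∈ L v) ∧
      ∀ u ∈ A, ∀ v ∈ A, ¬ H.Adj (f u) (f v) := by
  classical
  induction A using Finset.strongInduction with
  | H A ih =>
  rcases A.eq_empty_or_nonempty with rfl | hne
  · exact ⟨fun v => (hL v).choose, by simp, by simp⟩
  obtain ⟨v, hv, hdeg⟩ := hA A subset_rfl hne
  obtain ⟨f, hfL, hfI⟩ := ih (A.erase v) (erase_ssubset hv)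
    fun B hB => hA B (hB.trans (erase_subset v A))
  obtain ⟨w, hw, hwN⟩ := C.exists_mem_forall_not_adj v {u ∈ A | G.Adj v u}
    (fun u hu => (mem_filter.mp hu).2.symm) f
    (fun u hu => hfL u (mem_erase.mpr ⟨(mem_filter.mp hu).2.ne', (mem_filter.mp hu).1⟩)) hdeg
  have hwA : ∀ u ∈ A.erase v, ¬ H.Adj w (f u) := by
    intro u hu hadj
    obtain ⟨huv, huA⟩ := mem_erase.mp hu
    by_cases hGvu : G.Adj v u
    · exact hwN u (mem_filter.mpr ⟨huA, hGvu⟩) hadj.symm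
    · exact C.nonadj huv.symm hGvu w hw (f u) (hfL u hu) hadj
  refine ⟨Function.update f v w, fun x hx => ?_, fun x hx y hy => ?_⟩
  · by_cases hxv : x = v
    · simpa [hxv] using hw
    · simpa [hxv] using hfL x (mem_erase.mpr ⟨hxv, hx⟩)
  · by_cases hxv : x = v <;> by_cases hyv : y = v
    · simp [hxv, hyv]
    · simpa [hxv, hyv] using hwA y (mem_erase.mpr ⟨hyv, hy⟩)
    · simpa [hxv, hyv] using fun h => hwA x (mem_erase.mpr ⟨hxv, hx⟩) h.symm
    · simpa [hxv, hyv] using hfI x (mem_erase.mpr ⟨hxv, hx⟩) y (mem_erase.mpr ⟨hyv, hy⟩)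

theorem card_le_indepNum [Fintype W] [DecidableRel G.Adj] (C : DPCover G H L)
    (hL : ∀ v, (L v).Nonempty) (A : Finset V)
    (hA : ∀ B ⊆ A, B.Nonempty → ∃ v ∈ B, #{u ∈ B | G.Adj v u} < #(L v)) :
    #A ≤ _root_.indepNum H := by
  classical
  obtain ⟨f, hfL, hfI⟩ := C.exists_indep_transversal hL A hA
  calc #A = #(A.image f) := (card_image_of_injOn (C.injOn_of_forall_mem hfL)).symm
    _ ≤ _root_.indepNum H :=
      IsIndepFinset.card_le_indepNum (by simpa [IsIndepFinset] using hfI)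

end DPCover

end

theorem exists_card_eq_feedbackVertexNumber {V : Type} [Fintype V] (G : SimpleGraph V) :
    ∃ S : Finset V, #S = feedbackVertexNumber G ∧ (G.induce {v : V | v ∉ S}).IsAcyclic := by
  have : IsEmpty {v : V | v ∉ univ} := by simp
  have hne : {k | ∃ S : Finset V, #S = k ∧ (G.induce {v : V | v ∉ S}).IsAcyclic}.Nonempty :=
    ⟨_, univ, rfl, IsAcyclic.of_subsingleton⟩
  exact Nat.sInf_mem hne

theorem exists_dpCover {V : Type} (G : SimpleGraph V) (t : ℕ) :
    ∃ (H : SimpleGraph (V × Fin t)) (L : V → Finset (V × Fin t)),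
      DPCover G H L ∧ ∀ v, #(L v) = t := by
  refine ⟨fromRel fun a b => a.1 = b.1, fun v => {v} ×ˢ univ, ?_, by simp⟩
  have hmem : ∀ w v, w ∈ ({v} : Finset V) ×ˢ (univ : Finset (Fin t)) ↔ w.1 = v := by
    simp [eq_comm]
  have hsame : ∀ u v a b, a.1 = u → b.1 = v →
      (fromRel fun a b : V × Fin t => a.1 = b.1).Adj a b → u = v := by
    rintro _ _ a b rfl rfl h
    exact ((fromRel_adj _ a b).mp h).2.elim id Eq.symm
  constructor
  · exact fun w => ⟨w.1, (hmem w w.1).mpr rfl, fun y hy => ((hmem w y).mp hy).symm⟩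
  · intro v a ha b hb hab
    exact (fromRel_adj _ a b).mpr
      ⟨hab, .inl (((hmem a v).mp ha).trans ((hmem b v).mp hb).symm)⟩
  · intro u v huv a ha b hb b' _ hab _
    exact absurd (hsame u v a b ((hmem a u).mp ha) ((hmem b v).mp hb) hab) huv.ne
  · intro u v huv _ a ha b hb hab
    exact huv (hsame u v a b ((hmem a u).mp ha) ((hmem b v).mp hb) hab)

theorem le_alphaDP {V : Type} [Fintype V] (G : SimpleGraph V) (t n : ℕ)
    (h : ∀ (W : Type) [Fintype W] (H : SimpleGraph W) (L : V → Finset W),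
      DPCover G H L → (∀ v, #(L v) = t) → n ≤ _root_.indepNum H) :
    n ≤ alphaDP G t := by
  obtain ⟨H, L, C, hL⟩ := exists_dpCover G t
  refine le_csInf ⟨_, _, inferInstance, H, L, C, hL, rfl⟩ ?_
  rintro _ ⟨W, _, H, L, C, hL, rfl⟩
  exact h W H L C hL

/-- For any graph `G`, `α₂^{DP}(G) ≥ |V(G)| − τ(G)`. -/
theorem alphaDP_two_ge_card_sub_fvn {V : Type} [Fintype V] (G : SimpleGraph V) :
    Fintype.card V - feedbackVertexNumber G ≤ alphaDP G 2 := by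
  classical
  obtain ⟨S, hS, hacyc⟩ := exists_card_eq_feedbackVertexNumber G
  refine le_alphaDP G 2 _ fun W _ H L C hL => ?_
  rw [← hS, ← card_compl]
  refine C.card_le_indepNum (fun v => card_pos.mp (by rw [hL v]; omega)) Sᶜ fun B hB hne => ?_
  obtain ⟨v, hv, hdeg⟩ :=
    hacyc.exists_card_filter_adj_le_one (fun x hx => by simpa using hB hx) hne
  exact ⟨v, hv, by rw [hL v]; omega⟩
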